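/- arXiv:1403.1013 — 8 statements merged into one kernel-verified Lean document; each statement's English description precedes it below -/
import Mathlib

section
/- Let (S⁰ₙ)ₙ, (V⁰ₙ)ₙ be sequences of real random variables on probability spaces (Ω⁰ₙ, P⁰ₙ) and (S¹ₙ)ₙ, (V¹ₙ)ₙ sequences of real random variables on probability spaces (Ω¹ₙ, P¹ₙ). Suppose V⁰ₙ → 0 in probability, V¹ₙ → 0 in probability, and both S⁰ₙ and S¹ₙ converge in distribution to a standard normal random variable as n → ∞. Then for every ε > 0 there exists n₀ such that for all n ≥ n₀ and every threshold τ ∈ ℝ, (P⁰ₙ(S⁰ₙ + V⁰ₙ > τ) + P¹ₙ(S¹ₙ + V¹ₙ ≤ τ))/2 ≥ 1/2 − ε. -/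
/-!
Weak convergence on ℝ is convergence in the Lévy–Prokhorov metric, and that metric controls
all half-lines at once: for large `n` and every `τ`, the standard Gaussian mass of
`(τ + 2δ, ∞)` is at most `P⁰ₙ(S⁰ₙ > τ + δ) + δ`, and that of `(-∞, τ - 2δ)` is at most
`P¹ₙ(S¹ₙ < τ - δ) + δ`. Outside the event `|Vₙ| ≥ δ`, of probability at most `δ`, the
perturbation moves the statistic by less than `δ`. The two half-lines and the interval
`[τ - 2δ, τ + 2δ]` between them carry Gaussian mass one, and the interval has mass at most
`4δ` because the density is below one, so the two error probabilities sum to at least `1 - 8δ`.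
-/

open MeasureTheory ProbabilityTheory Filter
open Set Metric Real TopologicalSpace Topology
open scoped ENNReal NNReal

lemma eventually_levyProkhorovEDist_lt {Ω ι : Type*} [MeasurableSpace Ω] [PseudoMetricSpace Ω]
    [SeparableSpace Ω] [OpensMeasurableSpace Ω] {l : Filter ι}
    {μs : ι → ProbabilityMeasure Ω} {μ : ProbabilityMeasure Ω} (h : Tendsto μs l (𝓝 μ))
    {c : ℝ≥0∞} (hc : 0 < c) :
    ∀ᶠ i in l, levyProkhorovEDist (μ : Measure Ω) (μs i) < c := by
  have hLP := (LevyProkhorov.probabilityMeasureHomeomorph.continuous.tendsto μ).comp h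
  filter_upwards [EMetric.tendsto_nhds.mp hLP c hc] with i hi
  rwa [levyProkhorovEDist_comm]

lemma Real.thickening_Ioi_subset (δ t : ℝ) : thickening δ (Ioi t) ⊆ Ioi (t - δ) := by
  intro x hx
  obtain ⟨y, hy, hxy⟩ := mem_thickening_iff.mp hx
  have := (abs_sub_lt_iff.mp (Real.dist_eq x y ▸ hxy)).2
  simp only [mem_Ioi] at hy ⊢
  linarith

lemma Real.thickening_Iio_subset (δ t : ℝ) : thickening δ (Iio t) ⊆ Iio (t + δ) := by
  intro x hx
  obtain ⟨y, hy, hxy⟩ := mem_thickening_iff.mp hx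
  have := (abs_sub_lt_iff.mp (Real.dist_eq x y ▸ hxy)).1
  simp only [mem_Iio] at hy ⊢
  linarith

lemma gaussianPDFReal_le_inv_sqrt (μ : ℝ) (v : ℝ≥0) (x : ℝ) :
    gaussianPDFReal μ v x ≤ (√(2 * π * v))⁻¹ := by
  rw [gaussianPDFReal]
  refine mul_le_of_le_one_right (by positivity) (Real.exp_le_one_iff.mpr ?_)
  exact div_nonpos_of_nonpos_of_nonneg (neg_nonpos.mpr (sq_nonneg _)) (by positivity)

lemma gaussianReal_Icc_le (μ : ℝ) {v : ℝ≥0} (hv : v ≠ 0) (a b : ℝ) :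
    gaussianReal μ v (Icc a b) ≤ ENNReal.ofReal ((√(2 * π * v))⁻¹ * (b - a)) := by
  calc gaussianReal μ v (Icc a b) = ∫⁻ x in Icc a b, gaussianPDF μ v x :=
        gaussianReal_apply μ hv _
    _ ≤ ∫⁻ _ in Icc a b, ENNReal.ofReal (√(2 * π * v))⁻¹ :=
        lintegral_mono fun x => ENNReal.ofReal_le_ofReal (gaussianPDFReal_le_inv_sqrt μ v x)
    _ = ENNReal.ofReal ((√(2 * π * v))⁻¹ * (b - a)) := by
        rw [setLIntegral_const, Real.volume_Icc, ← ENNReal.ofReal_mul (by positivity)]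

lemma gaussianReal_zero_one_Icc_le {a b : ℝ} (hab : a ≤ b) :
    gaussianReal 0 1 (Icc a b) ≤ ENNReal.ofReal (b - a) := by
  refine (gaussianReal_Icc_le 0 one_ne_zero a b).trans (ENNReal.ofReal_le_ofReal ?_)
  have : (√(2 * π * (1 : ℝ≥0)))⁻¹ ≤ 1 :=
    inv_le_one_of_one_le₀ (Real.one_le_sqrt.mpr (by push_cast; linarith [pi_gt_three]))
  nlinarith

lemma measure_univ_le_Iio_add_Icc_add_Ioi {μ : Measure ℝ} (a b : ℝ) :
    μ univ ≤ μ (Iio a) + μ (Icc a b) + μ (Ioi b) := by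
  have hcover : univ ⊆ Iio a ∪ Icc a b ∪ Ioi b := by
    intro x _
    rcases lt_or_ge x a with h | h
    · exact Or.inl (Or.inl h)
    rcases le_or_gt x b with h' | h'
    · exact Or.inl (Or.inr ⟨h, h'⟩)
    · exact Or.inr h'
  calc μ univ ≤ μ (Iio a ∪ Icc a b ∪ Ioi b) := measure_mono hcover
    _ ≤ μ (Iio a ∪ Icc a b) + μ (Ioi b) := measure_union_le _ _
    _ ≤ μ (Iio a) + μ (Icc a b) + μ (Ioi b) := by gcongr; exact measure_union_le _ _

section Perturbation

variable {Ω : Type*} [MeasurableSpace Ω] (P : Measure Ω) (X V : Ω → ℝ) (τ δ : ℝ)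

lemma measure_lt_le_measure_lt_add_add :
    P {ω | τ + δ < X ω} ≤ P {ω | τ < X ω + V ω} + P {ω | δ ≤ |V ω|} := by
  refine (measure_mono fun ω (hω : τ + δ < X ω) => ?_).trans (measure_union_le _ _)
  by_cases hV : δ ≤ |V ω|
  · exact Or.inr hV
  · exact Or.inl (show τ < X ω + V ω by linarith [neg_abs_le (V ω)])

lemma measure_lt_le_measure_add_le_add :
    P {ω | X ω < τ - δ} ≤ P {ω | X ω + V ω ≤ τ} + P {ω | δ ≤ |V ω|} := by
  refine (measure_mono fun ω (hω : X ω < τ - δ) => ?_).trans (measure_union_le _ _)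
  by_cases hV : δ ≤ |V ω|
  · exact Or.inr hV
  · exact Or.inl (show X ω + V ω ≤ τ by linarith [le_abs_self (V ω)])

variable {P X δ} {μ : Measure ℝ}

lemma measure_Ioi_le_of_levyProkhorovEDist_lt (hX : Measurable X)
    (hμ : levyProkhorovEDist μ (P.map X) < ENNReal.ofReal δ) :
    μ (Ioi (τ + 2 * δ)) ≤ P {ω | τ < X ω + V ω} + P {ω | δ ≤ |V ω|} + ENNReal.ofReal δ := by
  have hδ : 0 ≤ δ := (ENNReal.ofReal_pos.mp (pos_of_gt hμ)).le
  have hthick : thickening δ (Ioi (τ + 2 * δ)) ⊆ Ioi (τ + δ) :=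
    (Real.thickening_Ioi_subset _ _).trans (Ioi_subset_Ioi (by linarith))
  calc μ (Ioi (τ + 2 * δ)) ≤ P.map X (thickening δ (Ioi (τ + 2 * δ))) + ENNReal.ofReal δ := by
        simpa [ENNReal.toReal_ofReal hδ] using
          left_measure_le_of_levyProkhorovEDist_lt hμ measurableSet_Ioi
    _ ≤ P {ω | τ + δ < X ω} + ENNReal.ofReal δ := by
        grw [hthick, Measure.map_apply hX measurableSet_Ioi]
        rfl
    _ ≤ _ := by grw [measure_lt_le_measure_lt_add_add P X V τ δ]

lemma measure_Iio_le_of_levyProkhorovEDist_lt (hX : Measurable X)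
    (hμ : levyProkhorovEDist μ (P.map X) < ENNReal.ofReal δ) :
    μ (Iio (τ - 2 * δ)) ≤ P {ω | X ω + V ω ≤ τ} + P {ω | δ ≤ |V ω|} + ENNReal.ofReal δ := by
  have hδ : 0 ≤ δ := (ENNReal.ofReal_pos.mp (pos_of_gt hμ)).le
  have hthick : thickening δ (Iio (τ - 2 * δ)) ⊆ Iio (τ - δ) :=
    (Real.thickening_Iio_subset _ _).trans (Iio_subset_Iio (by linarith))
  calc μ (Iio (τ - 2 * δ)) ≤ P.map X (thickening δ (Iio (τ - 2 * δ))) + ENNReal.ofReal δ := by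
        simpa [ENNReal.toReal_ofReal hδ] using
          left_measure_le_of_levyProkhorovEDist_lt hμ measurableSet_Iio
    _ ≤ P {ω | X ω < τ - δ} + ENNReal.ofReal δ := by
        grw [hthick, Measure.map_apply hX measurableSet_Iio]
        rfl
    _ ≤ _ := by grw [measure_lt_le_measure_add_le_add P X V τ δ]

end Perturbation

lemma one_le_measure_add_measure_add_of_levyProkhorovEDist_lt {Ω₀ Ω₁ : Type*}
    [MeasurableSpace Ω₀] [MeasurableSpace Ω₁] {P₀ : Measure Ω₀} {P₁ : Measure Ω₁}
    {X₀ V₀ : Ω₀ → ℝ} {X₁ V₁ : Ω₁ → ℝ} (hX₀ : Measurable X₀) (hX₁ : Measurable X₁)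
    {μ : Measure ℝ} [IsProbabilityMeasure μ] {δ : ℝ}
    (hμ₀ : levyProkhorovEDist μ (P₀.map X₀) < ENNReal.ofReal δ)
    (hμ₁ : levyProkhorovEDist μ (P₁.map X₁) < ENNReal.ofReal δ)
    (hV₀ : P₀ {ω | δ ≤ |V₀ ω|} ≤ ENNReal.ofReal δ) (hV₁ : P₁ {ω | δ ≤ |V₁ ω|} ≤ ENNReal.ofReal δ)
    (τ : ℝ) :
    1 ≤ P₀ {ω | τ < X₀ ω + V₀ ω} + P₁ {ω | X₁ ω + V₁ ω ≤ τ}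
      + μ (Icc (τ - 2 * δ) (τ + 2 * δ)) + ENNReal.ofReal (4 * δ) := by
  calc (1 : ℝ≥0∞) = μ univ := measure_univ.symm
    _ ≤ _ := measure_univ_le_Iio_add_Icc_add_Ioi (τ - 2 * δ) (τ + 2 * δ)
    _ ≤ (P₁ {ω | X₁ ω + V₁ ω ≤ τ} + ENNReal.ofReal δ + ENNReal.ofReal δ)
        + μ (Icc (τ - 2 * δ) (τ + 2 * δ))
        + (P₀ {ω | τ < X₀ ω + V₀ ω} + ENNReal.ofReal δ + ENNReal.ofReal δ) := by
      gcongr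
      · exact (measure_Iio_le_of_levyProkhorovEDist_lt V₁ τ hX₁ hμ₁).trans (by gcongr)
      · exact (measure_Ioi_le_of_levyProkhorovEDist_lt V₀ τ hX₀ hμ₀).trans (by gcongr)
    _ = _ := by rw [ENNReal.ofReal_mul (by norm_num), ENNReal.ofReal_ofNat]; ring

/-- Lemma 1 of the paper: if the test statistic under `H₀` is `S⁰ₙ + V⁰ₙ` and under `H₁`
is `S¹ₙ + V¹ₙ`, where `V⁰ₙ → 0` and `V¹ₙ → 0` in probability and `S⁰ₙ, S¹ₙ` converge in
distribution (weak convergence of laws) to a standard normal, then for every `ε > 0` there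
is `n₀` such that for all `n ≥ n₀` and every threshold `τ`, the average of the false alarm
and missed detection probabilities is at least `1/2 - ε`. -/
theorem stmt_0
    (Ω0 Ω1 : ℕ → Type)
    [∀ n, MeasurableSpace (Ω0 n)] [∀ n, MeasurableSpace (Ω1 n)]
    (P0 : ∀ n, Measure (Ω0 n)) [∀ n, IsProbabilityMeasure (P0 n)]
    (P1 : ∀ n, Measure (Ω1 n)) [∀ n, IsProbabilityMeasure (P1 n)]
    (S0 V0 : ∀ n, Ω0 n → ℝ) (S1 V1 : ∀ n, Ω1 n → ℝ)
    (hS0m : ∀ n, Measurable (S0 n)) (hS1m : ∀ n, Measurable (S1 n))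
    (hV0 : ∀ δ : ℝ, 0 < δ →
      Tendsto (fun n => P0 n {ω | δ ≤ |V0 n ω|}) atTop (nhds 0))
    (hV1 : ∀ δ : ℝ, 0 < δ →
      Tendsto (fun n => P1 n {ω | δ ≤ |V1 n ω|}) atTop (nhds 0))
    (hS0 : Tendsto (β := ProbabilityMeasure ℝ)
      (fun n => (⟨(P0 n).map (S0 n), Measure.isProbabilityMeasure_map (hS0m n).aemeasurable⟩ :
        ProbabilityMeasure ℝ)) atTop
      (nhds (⟨gaussianReal 0 1, inferInstance⟩ : ProbabilityMeasure ℝ)))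
    (hS1 : Tendsto (β := ProbabilityMeasure ℝ)
      (fun n => (⟨(P1 n).map (S1 n), Measure.isProbabilityMeasure_map (hS1m n).aemeasurable⟩ :
        ProbabilityMeasure ℝ)) atTop
      (nhds (⟨gaussianReal 0 1, inferInstance⟩ : ProbabilityMeasure ℝ))) :
    ∀ ε : ℝ, 0 < ε → ∃ n₀ : ℕ, ∀ n ≥ n₀, ∀ τ : ℝ,
      ((P0 n {ω | S0 n ω + V0 n ω > τ}).toReal
          + (P1 n {ω | S1 n ω + V1 n ω ≤ τ}).toReal) / 2
        ≥ 1 / 2 - ε := by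
  intro ε hε
  set δ := ε / 4 with hδ_def
  have hδ : 0 < δ := by positivity
  have hδ' : 0 < ENNReal.ofReal δ := ENNReal.ofReal_pos.mpr hδ
  obtain ⟨n₀, hn₀⟩ := eventually_atTop.mp <|
    (eventually_levyProkhorovEDist_lt hS0 hδ').and <|
      (eventually_levyProkhorovEDist_lt hS1 hδ').and <|
        ((hV0 δ hδ).eventually_lt_const hδ').and ((hV1 δ hδ).eventually_lt_const hδ')
  refine ⟨n₀, fun n hn τ => ?_⟩
  obtain ⟨hLP0, hLP1, hsmall0, hsmall1⟩ := hn₀ n hn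
  have htotal : 1 ≤ P0 n {ω | S0 n ω + V0 n ω > τ} + P1 n {ω | S1 n ω + V1 n ω ≤ τ}
      + ENNReal.ofReal (4 * δ) + ENNReal.ofReal (4 * δ) := by
    grw [one_le_measure_add_measure_add_of_levyProkhorovEDist_lt (μ := gaussianReal 0 1)
        (hS0m n) (hS1m n) hLP0 hLP1 hsmall0.le hsmall1.le τ,
      gaussianReal_zero_one_Icc_le (by linarith), show τ + 2 * δ - (τ - 2 * δ) = 4 * δ by ring]
  have hreal := ENNReal.toReal_mono (by finiteness) htotal
  simp only [ENNReal.toReal_one, ENNReal.toReal_add, ne_eq, measure_ne_top, ENNReal.ofReal_ne_top,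
    ENNReal.add_eq_top, or_self, not_false_eq_true] at hreal
  rw [ENNReal.toReal_ofReal (by positivity)] at hreal
  linarith
end

section
/- For every t ∈ ℝ, every natural number n, and every fixed vector c ∈ {−1,1}ⁿ, (1/2^{2n}) · Σ_{b ∈ {−1,1}ⁿ} Σ_{d ∈ {−1,1}ⁿ} exp(t · Σ_{i=1}^{n} (cᵢbᵢ + (cᵢ + bᵢ)dᵢ)) ≤ (cosh t)ⁿ · (cosh 2t)ⁿ. -/
open Finset

lemma aux_uv (u v : ℝ) (hu : 0 < u) (hv : 0 < v) (huv : u * v = 1) :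
    2 * v ≤ u + v ^ 3 := by
  nlinarith [mul_nonneg hu.le (sq_nonneg (v ^ 2 - 1))]

lemma key_pt (t ci : ℝ) (h : ci = -1 ∨ ci = 1) :
    ∑ x ∈ ({-1, 1} : Finset ℝ), ∑ y ∈ ({-1, 1} : Finset ℝ),
      Real.exp (t * (ci * x + (ci + x) * y))
      ≤ 4 * Real.cosh t * Real.cosh (2 * t) := by
  have hne : (-1 : ℝ) ≠ 1 := by norm_num
  have hu := Real.exp_pos t
  have hv := Real.exp_pos (-t)
  have huv : Real.exp t * Real.exp (-t) = 1 := by rw [← Real.exp_add]; simp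
  have e1 : Real.exp (-t) * Real.exp (t * 2) = Real.exp t := by
    rw [← Real.exp_add]; ring_nf
  have e1' : Real.exp t * Real.exp (-(t * 2)) = Real.exp (-t) := by
    rw [← Real.exp_add]; ring_nf
  have e2 : Real.exp (-t) * Real.exp (-(t * 2)) = Real.exp (-t) ^ 3 := by
    rw [← Real.exp_add, show -t + -(t*2) = 3 * -t by ring, ← Real.exp_nat_mul]
    norm_num
  have e3 : Real.exp t * Real.exp (t * 2) = Real.exp t ^ 3 := by
    rw [← Real.exp_add, show t + t*2 = 3 * t by ring, ← Real.exp_nat_mul]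
    norm_num
  have e4 : Real.exp (t * 3) = Real.exp t ^ 3 := by
    rw [show t * 3 = 3 * t by ring, ← Real.exp_nat_mul]; norm_num
  have hk1 := aux_uv (Real.exp t) (Real.exp (-t)) hu hv huv
  have hk2 := aux_uv (Real.exp (-t)) (Real.exp t) hv hu (by rw [mul_comm]; exact huv)
  rw [Finset.sum_pair hne, Finset.sum_pair hne, Finset.sum_pair hne,
    Real.cosh_eq, Real.cosh_eq]
  rcases h with h | h <;> subst h <;> ring_nf <;> linarith [hk1, hk2, e1, e1', e2, e3, e4]

/-- For every real `t`, natural `n`, and fixed `c ∈ {-1,1}^n`,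
`(1/2^(2n)) * Σ_{b,d ∈ {-1,1}^n} exp (t * Σ_i (cᵢbᵢ + (cᵢ+bᵢ)dᵢ)) ≤ (cosh t)^n * (cosh 2t)^n`. -/
theorem stmt_4 (t : ℝ) (n : ℕ) (c : Fin n → ℝ) (hc : ∀ i, c i = -1 ∨ c i = 1) :
    (1 / 2 ^ (2 * n) : ℝ) *
      ∑ b ∈ Fintype.piFinset (fun _ : Fin n => ({-1, 1} : Finset ℝ)),
        ∑ d ∈ Fintype.piFinset (fun _ : Fin n => ({-1, 1} : Finset ℝ)),
          Real.exp (t * ∑ i, (c i * b i + (c i + b i) * d i))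
      ≤ Real.cosh t ^ n * Real.cosh (2 * t) ^ n := by
  have hfac :
      (∑ b ∈ Fintype.piFinset (fun _ : Fin n => ({-1, 1} : Finset ℝ)),
        ∑ d ∈ Fintype.piFinset (fun _ : Fin n => ({-1, 1} : Finset ℝ)),
          Real.exp (t * ∑ i, (c i * b i + (c i + b i) * d i)))
      = ∏ i : Fin n, ∑ x ∈ ({-1, 1} : Finset ℝ), ∑ y ∈ ({-1, 1} : Finset ℝ),
          Real.exp (t * (c i * x + (c i + x) * y)) := by
    symm
    rw [Finset.prod_univ_sum]
    refine Finset.sum_congr rfl fun b _ => ?_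
    rw [Finset.prod_univ_sum]
    refine Finset.sum_congr rfl fun d _ => ?_
    rw [← Real.exp_sum, ← Finset.mul_sum]
  rw [hfac]
  have hbound : (∏ i : Fin n, ∑ x ∈ ({-1, 1} : Finset ℝ), ∑ y ∈ ({-1, 1} : Finset ℝ),
          Real.exp (t * (c i * x + (c i + x) * y)))
      ≤ (4 * Real.cosh t * Real.cosh (2 * t)) ^ n := by
    calc (∏ i : Fin n, ∑ x ∈ ({-1, 1} : Finset ℝ), ∑ y ∈ ({-1, 1} : Finset ℝ),
          Real.exp (t * (c i * x + (c i + x) * y)))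
        ≤ ∏ _i : Fin n, (4 * Real.cosh t * Real.cosh (2 * t)) := by
          apply Finset.prod_le_prod
          · intro i _
            exact Finset.sum_nonneg fun x _ => Finset.sum_nonneg fun y _ => (Real.exp_pos _).le
          · intro i _
            exact key_pt t (c i) (hc i)
      _ = (4 * Real.cosh t * Real.cosh (2 * t)) ^ n := by
          simp [Finset.prod_const]
  have h2n : ((2 : ℝ) ^ (2 * n)) = 4 ^ n := by
    rw [pow_mul]; norm_num
  have h4 : (0 : ℝ) < 4 ^ n := by positivity
  calc (1 / 2 ^ (2 * n) : ℝ) * _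
      ≤ (1 / 2 ^ (2 * n) : ℝ) * (4 * Real.cosh t * Real.cosh (2 * t)) ^ n := by
        apply mul_le_mul_of_nonneg_left hbound
        positivity
    _ = Real.cosh t ^ n * Real.cosh (2 * t) ^ n := by
        rw [h2n, mul_pow, mul_pow]
        field_simp
end

section
/- Let n ≥ 1, let Z₁,…,Zₙ be i.i.d. standard normal random variables, X = Σ_{i=1}^{n} Zᵢ², σ > 0 and 0 ≤ P < σ²/2. Define U₀ = (σ²/(σ²+P))^{n/2}·exp(P·X/(2(σ²+P))) and U₁ = (σ²/(σ²+P))^{n/2}·exp(P·X/(2σ²)). Then E[U₀²] / E[U₁²] = (1 − 2P²/(σ²(σ²−P)))^{n/2}. -/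
open MeasureTheory ProbabilityTheory Real
open scoped NNReal

/-!
Squaring `U₀` and `U₁` doubles the exponent, so `E[U₀²]` and `E[U₁²]` are the common prefactor
squared times the moment generating function `E[exp (t X)] = (1 - 2t)^(-n/2)` of the chi-squared
variable `X`, at `t = P/(σ² + P)` and `t = P/σ²` respectively. The prefactors cancel in the ratio,
and `(σ² - 2P)(σ² + P) = σ²(σ² - P) - 2P²` finishes.
-/

lemma integral_exp_mul_sq_gaussianReal {v : ℝ≥0} {t : ℝ} (ht : 2 * t * v < 1) :
    ∫ x, exp (t * x ^ 2) ∂gaussianReal 0 v = (1 - 2 * t * v) ^ (-(1 / 2 : ℝ)) := by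
  rcases eq_or_ne v 0 with rfl | hv
  · simp [gaussianReal_zero_var]
  have hv' : (0 : ℝ) < v := by positivity
  have hcoef : 0 < 1 / (2 * v) - t := by
    rw [sub_pos, lt_div_iff₀ (by positivity)]; linarith
  have hdensity : ∀ x, gaussianPDFReal 0 v x • exp (t * x ^ 2)
      = (√(2 * π * v))⁻¹ * exp (-(1 / (2 * v) - t) * x ^ 2) := by
    intro x
    rw [gaussianPDFReal, smul_eq_mul, mul_assoc, ← exp_add]
    congr 2
    field_simp
    ring
  simp_rw [integral_gaussianReal_eq_integral_smul hv, hdensity]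
  rw [integral_const_mul, integral_gaussian, sqrt_eq_rpow, sqrt_eq_rpow,
    rpow_neg (by linarith), ← inv_rpow (by positivity), ← inv_rpow (by linarith),
    ← mul_rpow (by positivity) (by positivity)]
  congr 1
  field_simp

lemma mgf_sum_sq_of_iIndepFun {Ω ι : Type*} [MeasurableSpace Ω] {μ : Measure Ω} [Fintype ι]
    {X : ι → Ω → ℝ} {v : ℝ≥0} (hXm : ∀ i, Measurable (X i))
    (hX : ∀ i, μ.map (X i) = gaussianReal 0 v) (hindep : iIndepFun X μ)
    {t : ℝ} (ht : 2 * t * v < 1) :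
    mgf (fun ω ↦ ∑ i, X i ω ^ 2) μ t = (1 - 2 * t * v) ^ (-(Fintype.card ι / 2 : ℝ)) := by
  have hsqm : ∀ i, Measurable (fun ω ↦ X i ω ^ 2) := fun i ↦ (hXm i).pow_const 2
  have hmgf_sq : ∀ i, mgf (fun ω ↦ X i ω ^ 2) μ t = (1 - 2 * t * v) ^ (-(1 / 2 : ℝ)) := by
    intro i
    rw [← integral_exp_mul_sq_gaussianReal ht, ← hX i, integral_map (hXm i).aemeasurable
      (by fun_prop)]
    rfl
  have hsum : (fun ω ↦ ∑ i, X i ω ^ 2) = ∑ i, fun ω ↦ X i ω ^ 2 := by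
    ext ω; simp
  have hindep_sq : iIndepFun (fun i ω ↦ X i ω ^ 2) μ :=
    hindep.comp (fun _ x ↦ x ^ 2) fun _ ↦ measurable_id.pow_const 2
  rw [hsum, hindep_sq.mgf_sum hsqm,
    Finset.prod_congr rfl fun i _ ↦ hmgf_sq i, Finset.prod_const, Finset.card_univ,
    ← rpow_natCast, ← rpow_mul (by linarith)]
  ring_nf

lemma integral_sq_mul_exp_div {Ω : Type*} [MeasurableSpace Ω] (μ : Measure Ω) (Y : Ω → ℝ)
    (c a b : ℝ) :
    ∫ ω, (c * exp (a * Y ω / (2 * b))) ^ 2 ∂μ = c ^ 2 * mgf Y μ (a / b) := by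
  rw [mgf, ← integral_const_mul]
  congr with ω
  rw [mul_pow, ← exp_nat_mul]
  ring_nf

theorem stmt_8_general
    {Ω : Type} [MeasurableSpace Ω] (μ : Measure Ω) [IsProbabilityMeasure μ]
    (n : ℕ)
    (Z : Fin n → Ω → ℝ) (hZm : ∀ i, Measurable (Z i))
    (hZ : ∀ i, μ.map (Z i) = gaussianReal 0 1)
    (hindep : iIndepFun Z μ)
    (σ P : ℝ) (hσ : 0 < σ) (hP0 : 0 ≤ P) (hP : P < σ ^ 2 / 2) :
    (∫ ω, ((σ ^ 2 / (σ ^ 2 + P)) ^ ((n : ℝ) / 2)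
        * Real.exp (P * (∑ i, Z i ω ^ 2) / (2 * (σ ^ 2 + P)))) ^ 2 ∂μ)
      / (∫ ω, ((σ ^ 2 / (σ ^ 2 + P)) ^ ((n : ℝ) / 2)
        * Real.exp (P * (∑ i, Z i ω ^ 2) / (2 * σ ^ 2))) ^ 2 ∂μ)
      = (1 - 2 * P ^ 2 / (σ ^ 2 * (σ ^ 2 - P))) ^ ((n : ℝ) / 2) := by
  have hσ2 : 0 < σ ^ 2 := by positivity
  have hσP : 0 < σ ^ 2 - P := by linarith
  have hσ2P : 0 < σ ^ 2 - 2 * P := by linarith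
  have hmgf (t : ℝ) (ht : t < 1 / 2) :
      mgf (fun ω ↦ ∑ i, Z i ω ^ 2) μ t = (1 - 2 * t) ^ (-(n / 2 : ℝ)) := by
    simpa using mgf_sum_sq_of_iIndepFun hZm hZ hindep (t := t) (by push_cast; linarith)
  have h_one_sub₀ : 1 - 2 * (P / (σ ^ 2 + P)) = (σ ^ 2 - P) / (σ ^ 2 + P) := by
    field_simp; ring
  have h_one_sub₁ : 1 - 2 * (P / σ ^ 2) = (σ ^ 2 - 2 * P) / σ ^ 2 := by
    field_simp
  rw [integral_sq_mul_exp_div, integral_sq_mul_exp_div, mul_div_mul_left _ _ (by positivity),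
    hmgf _ (by rw [div_lt_iff₀ (by positivity)]; linarith),
    hmgf _ (by rw [div_lt_iff₀ hσ2]; linarith), h_one_sub₀, h_one_sub₁,
    rpow_neg (by positivity), rpow_neg (by positivity), inv_div_inv,
    ← div_rpow (by positivity) (by positivity)]
  congr 1
  field_simp
  ring

/-- If `X = Σᵢ Zᵢ²` is chi-squared with `n` degrees of freedom, `σ > 0`, `0 ≤ P < σ²/2`,
`U₀ = (σ²/(σ²+P))^(n/2) * exp (P X / (2(σ²+P)))` and
`U₁ = (σ²/(σ²+P))^(n/2) * exp (P X / (2σ²))`, then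
`E[U₀²] / E[U₁²] = (1 - 2P²/(σ²(σ²-P)))^(n/2)`. -/
theorem stmt_8
    {Ω : Type} [MeasurableSpace Ω] (μ : Measure Ω) [IsProbabilityMeasure μ]
    (n : ℕ) (hn : 1 ≤ n)
    (Z : Fin n → Ω → ℝ) (hZm : ∀ i, Measurable (Z i))
    (hZ : ∀ i, μ.map (Z i) = gaussianReal 0 1)
    (hindep : iIndepFun Z μ)
    (σ P : ℝ) (hσ : 0 < σ) (hP0 : 0 ≤ P) (hP : P < σ ^ 2 / 2) :
    (∫ ω, ((σ ^ 2 / (σ ^ 2 + P)) ^ ((n : ℝ) / 2)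
        * Real.exp (P * (∑ i, Z i ω ^ 2) / (2 * (σ ^ 2 + P)))) ^ 2 ∂μ)
      / (∫ ω, ((σ ^ 2 / (σ ^ 2 + P)) ^ ((n : ℝ) / 2)
        * Real.exp (P * (∑ i, Z i ω ^ 2) / (2 * σ ^ 2))) ^ 2 ∂μ)
      = (1 - 2 * P ^ 2 / (σ ^ 2 * (σ ^ 2 - P))) ^ ((n : ℝ) / 2) :=
  stmt_8_general μ n Z hZm hZ hindep σ P hσ hP0 hP
end

section
/- Let σ > 0 and c ∈ (0,1). Let T : ℕ → ℝ satisfy T(n) → ∞ and (log T(n))/n → 0 as n → ∞. Define Pₙ = c·σ²·√((log T(n))/n). Then T(n) · (1 − 2Pₙ²/(σ²(σ² − Pₙ)))^{n/2} → ∞ as n → ∞. -/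
open Filter Real

set_option maxHeartbeats 1600000 in
/-- If `σ > 0`, `c ∈ (0,1)`, `T n → ∞`, `log (T n) / n → 0`, and
`Pₙ = c σ² √(log (T n) / n)`, then `T n * (1 - 2 Pₙ²/(σ²(σ² - Pₙ)))^(n/2) → ∞`. -/
theorem stmt_9 (σ c : ℝ) (hσ : 0 < σ) (hc0 : 0 < c) (hc1 : c < 1)
    (T : ℕ → ℝ) (hT : Tendsto T atTop atTop)
    (hlog : Tendsto (fun n => Real.log (T n) / n) atTop (nhds 0)) :
    Tendsto (fun n =>
      T n * (1 - 2 * (c * σ ^ 2 * Real.sqrt (Real.log (T n) / n)) ^ 2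
          / (σ ^ 2 * (σ ^ 2 - c * σ ^ 2 * Real.sqrt (Real.log (T n) / n)))) ^ ((n : ℝ) / 2))
      atTop atTop := by
  set x : ℕ → ℝ := fun n => Real.sqrt (Real.log (T n) / n) with hxdef
  clear_value x
  have hx0 : Tendsto x atTop (nhds 0) := by
    rw [hxdef]
    have h := (Real.continuous_sqrt.tendsto 0).comp hlog
    rw [Real.sqrt_zero] at h
    exact h
  have hsum : Tendsto (fun n => c * x n + 2 * c ^ 2 * (x n) ^ 2) atTop (nhds 0) := by
    have h1 : Tendsto (fun n => c * x n) atTop (nhds (c * 0)) := hx0.const_mul c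
    have h2 : Tendsto (fun n => 2 * c ^ 2 * (x n) ^ 2) atTop (nhds (2 * c ^ 2 * 0 ^ 2)) :=
      (hx0.pow 2).const_mul (2 * c ^ 2)
    simpa using h1.add h2
  have hc2 : c ^ 2 < 1 := by nlinarith
  set ε : ℝ := (1 - c ^ 2) / (1 + c ^ 2) with hεdef
  clear_value ε
  have hε : 0 < ε := by
    rw [hεdef]
    apply div_pos <;> nlinarith
  -- Target lower bound tends to ∞
  have hlow : Tendsto (fun n => Real.exp (ε * Real.log (T n))) atTop atTop := by
    refine Real.tendsto_exp_atTop.comp ?_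
    exact (Real.tendsto_log_atTop.comp hT).const_mul_atTop hε
  refine tendsto_atTop_mono' atTop ?_ hlow
  have hsmall : ∀ᶠ n in atTop, c * x n + 2 * c ^ 2 * (x n) ^ 2 < (1 - c ^ 2) / 2 :=
    hsum.eventually_lt_const (by nlinarith)
  filter_upwards [hT.eventually_ge_atTop 1, hsmall, eventually_ge_atTop 1]
    with n hT1 hsm hn1
  set u : ℝ := x n with hu
  clear_value u
  have hlogT : 0 ≤ Real.log (T n) := Real.log_nonneg hT1
  have hnpos : (0:ℝ) < n := by exact_mod_cast hn1
  have hu0 : 0 ≤ u := by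
    rw [hu, hxdef]; positivity
  have hu2 : u ^ 2 = Real.log (T n) / n := by
    rw [hu, hxdef]
    exact Real.sq_sqrt (div_nonneg hlogT (Nat.cast_nonneg n))
  have hcx : 0 ≤ c * u := by positivity
  have hcx2 : 0 ≤ 2 * c ^ 2 * u ^ 2 := by positivity
  have hd : (1 + c ^ 2) / 2 ≤ 1 - c * u - 2 * c ^ 2 * u ^ 2 := by nlinarith [hsm]
  set d : ℝ := 1 - c * u - 2 * c ^ 2 * u ^ 2 with hddef
  clear_value d
  have hdpos : 0 < d := by nlinarith
  have h1cx : 0 < 1 - c * u := by nlinarith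
  set t : ℝ := 2 * c ^ 2 * u ^ 2 / d with htdef
  clear_value t
  have ht0 : 0 ≤ t := by
    rw [htdef]
    exact div_nonneg (by positivity) hdpos.le
  -- rewrite the base
  have hbase : 1 - 2 * (c * σ ^ 2 * u) ^ 2 / (σ ^ 2 * (σ ^ 2 - c * σ ^ 2 * u))
      = 1 - 2 * c ^ 2 * u ^ 2 / (1 - c * u) := by
    have hden : (0:ℝ) < σ ^ 2 - c * σ ^ 2 * u := by
      nlinarith [mul_pos (pow_pos hσ 2) h1cx]
    field_simp [hσ.ne', hden.ne', h1cx.ne']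
  have hbase2 : 1 - 2 * c ^ 2 * u ^ 2 / (1 - c * u) = 1 / (1 + t) := by
    have h1t : 1 + t = (1 - c * u) / d := by
      rw [htdef]
      field_simp [hdpos.ne']
      rw [hddef]
      ring
    have e1 : 1 - 2 * c ^ 2 * u ^ 2 / (1 - c * u) = d / (1 - c * u) := by
      rw [hddef]
      field_simp [h1cx.ne']
    rw [e1, h1t, one_div_div]
  have h1tpos : 0 < 1 + t := by linarith
  have hbasepos : 0 < 1 - 2 * c ^ 2 * u ^ 2 / (1 - c * u) := by
    rw [hbase2]; positivity
  -- exp(-t) ≤ base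
  have hexp : Real.exp (-t) ≤ 1 - 2 * c ^ 2 * u ^ 2 / (1 - c * u) := by
    rw [hbase2]
    rw [Real.exp_neg, inv_eq_one_div]
    exact one_div_le_one_div_of_le h1tpos (by linarith [Real.add_one_le_exp t])
  -- rpow bound
  have hhalf : (0:ℝ) ≤ (n : ℝ) / 2 := by positivity
  have hrpow : Real.exp (-t * ((n:ℝ)/2)) ≤
      (1 - 2 * c ^ 2 * u ^ 2 / (1 - c * u)) ^ ((n:ℝ)/2) := by
    calc Real.exp (-t * ((n:ℝ)/2)) = (Real.exp (-t)) ^ ((n:ℝ)/2) := by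
          rw [Real.rpow_def_of_pos (Real.exp_pos _), Real.log_exp]
        _ ≤ _ := Real.rpow_le_rpow (Real.exp_pos _).le hexp hhalf
  -- key arithmetic: log T n - t * n/2 ≥ ε log T n
  have hkey : ε * Real.log (T n) ≤ Real.log (T n) + (-t * ((n:ℝ)/2)) := by
    have htn : t * ((n:ℝ)/2) = c ^ 2 * Real.log (T n) / d := by
      rw [htdef, hu2]
      field_simp [hdpos.ne', hnpos.ne']
    have h2 : (0:ℝ) < 1 + c ^ 2 := by positivity
    have hdiv : c ^ 2 * Real.log (T n) / d ≤ 2 * c ^ 2 * Real.log (T n) / (1 + c ^ 2) := by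
      rw [div_le_div_iff₀ hdpos h2]
      nlinarith [mul_nonneg (mul_nonneg (sq_nonneg c) hlogT)
        (by linarith : (0:ℝ) ≤ 2 * d - (1 + c ^ 2))]
    have heq : ε * Real.log (T n) + 2 * c ^ 2 * Real.log (T n) / (1 + c ^ 2)
        = Real.log (T n) := by
      rw [hεdef]
      field_simp [h2.ne']
      ring
    linarith [htn, hdiv, heq]
  -- combine
  have hTpos : 0 < T n := lt_of_lt_of_le one_pos hT1
  calc Real.exp (ε * Real.log (T n))
      ≤ Real.exp (Real.log (T n) + (-t * ((n:ℝ)/2))) := Real.exp_le_exp.2 hkey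
    _ = T n * Real.exp (-t * ((n:ℝ)/2)) := by
        rw [Real.exp_add, Real.exp_log hTpos]
    _ ≤ T n * (1 - 2 * c ^ 2 * u ^ 2 / (1 - c * u)) ^ ((n:ℝ)/2) := by
        exact mul_le_mul_of_nonneg_left hrpow hTpos.le
    _ = _ := by rw [← hbase, hu, hxdef]
end

section
/- Let σ > 0 and c ∈ (0,1). Let T : ℕ → ℝ satisfy T(n) → ∞ and (log T(n))/n → 0 as n → ∞. For each n, let Z_{n,1},…,Z_{n,n} be i.i.d. standard normal random variables, Xₙ = Σ_{i=1}^{n} Z_{n,i}², Pₙ = c·σ²·√((log T(n))/n), U₁ₙ = (σ²/(σ²+Pₙ))^{n/2}·exp(Pₙ·Xₙ/(2σ²)), and sₙ = √((σ⁴/(σ⁴−Pₙ²))^{n/2} − 1). Then U₁ₙ/(sₙ·√(T(n)−1)) → 0 in probability as n → ∞. -/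
/-!
By the moment generating function of a chi-squared variable, `E U₁ₙ = (σ⁴/(σ⁴ - Pₙ²))^(n/2)`,
which is exactly `sₙ² + 1`. Markov's inequality therefore bounds the probability by
`(sₙ² + 1) / (ε sₙ √(T - 1))`, which is at most `(2/ε) √((sₙ² + 1) / T)` once `sₙ² + 1 ≥ 2` and
`T ≥ 2`. Writing `x = c² log T / n → 0`, we have `sₙ² + 1 = (1 - x)^(-n/2)`, and
`x ≤ -log (1 - x) ≤ 2x` for `x ≤ 1/2` gives `T^(c²/2) ≤ sₙ² + 1 ≤ T^(c²)`. So the bound is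
`(2/ε) T^(-(1 - c²)/2) → 0`, since `c < 1`.
-/

open MeasureTheory ProbabilityTheory Filter Real

lemma lintegral_exp_mul_sq_gaussianReal {t : ℝ} (ht : t < 1 / 2) :
    ∫⁻ x, ENNReal.ofReal (exp (t * x ^ 2)) ∂gaussianReal 0 1 = ENNReal.ofReal (√(1 - 2 * t))⁻¹ := by
  have hb : 0 < 1 / 2 - t := by linarith
  have hdensity : ∀ x : ℝ, gaussianPDF 0 1 x * ENNReal.ofReal (exp (t * x ^ 2))
      = ENNReal.ofReal ((√(2 * π))⁻¹ * exp (-(1 / 2 - t) * x ^ 2)) := by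
    intro x
    rw [gaussianPDF, ← ENNReal.ofReal_mul (gaussianPDFReal_nonneg _ _ _), gaussianPDFReal]
    push_cast
    rw [mul_assoc, ← exp_add]
    ring_nf
  rw [gaussianReal_of_var_ne_zero 0 one_ne_zero,
    lintegral_withDensity_eq_lintegral_mul _ (measurable_gaussianPDF 0 1) (by fun_prop)]
  simp only [Pi.mul_apply, hdensity]
  rw [← ofReal_integral_eq_lintegral_ofReal ((integrable_exp_neg_mul_sq hb).const_mul _)
      (ae_of_all _ fun x => by positivity), integral_const_mul, integral_gaussian,
    ← sqrt_inv, ← sqrt_mul (by positivity), ← sqrt_inv]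
  congr 2
  field_simp

lemma lintegral_exp_mul_sum_sq {Ω ι : Type*} [MeasurableSpace Ω] {μ : Measure Ω} [Fintype ι]
    {Z : ι → Ω → ℝ} (hZm : ∀ i, Measurable (Z i)) (hZ : ∀ i, μ.map (Z i) = gaussianReal 0 1)
    (hindep : iIndepFun Z μ) {t : ℝ} (ht : t < 1 / 2) :
    ∫⁻ ω, ENNReal.ofReal (exp (t * ∑ i, Z i ω ^ 2)) ∂μ
      = ENNReal.ofReal ((1 - 2 * t)⁻¹ ^ ((Fintype.card ι : ℝ) / 2)) := by
  have hφ : Measurable fun x : ℝ => ENNReal.ofReal (exp (t * x ^ 2)) := by fun_prop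
  have hfactor : ∀ ω, ENNReal.ofReal (exp (t * ∑ i, Z i ω ^ 2))
      = ∏ i, ENNReal.ofReal (exp (t * Z i ω ^ 2)) := by
    intro ω
    rw [← ENNReal.ofReal_prod_of_nonneg fun i _ => (exp_pos _).le, ← exp_sum, Finset.mul_sum]
  have hmarginal : ∀ i, ∫⁻ ω, ENNReal.ofReal (exp (t * Z i ω ^ 2)) ∂μ
      = ENNReal.ofReal (√(1 - 2 * t))⁻¹ := by
    intro i
    rw [← lintegral_map hφ (hZm i), hZ i, lintegral_exp_mul_sq_gaussianReal ht]
  simp_rw [hfactor]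
  rw [lintegral_prod_eq_prod_lintegral_of_indepFun Finset.univ
      (fun i ω => ENNReal.ofReal (exp (t * Z i ω ^ 2))) (hindep.comp _ fun _ => hφ)
      fun i => hφ.comp (hZm i)]
  simp only [hmarginal, Finset.prod_const, Finset.card_univ]
  rw [← ENNReal.ofReal_pow (by positivity), ← sqrt_inv, sqrt_eq_rpow, ← rpow_natCast,
    ← rpow_mul (inv_nonneg.2 (by linarith))]
  ring_nf

/-- `U₁ₙ` as a function of the slot energy `x = Xₙ`, with `n` symbols of power `P`. -/
noncomputable def likelihoodRatio (σ P : ℝ) (n : ℕ) (x : ℝ) : ℝ :=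
  (σ ^ 2 / (σ ^ 2 + P)) ^ ((n : ℝ) / 2) * exp (P * x / (2 * σ ^ 2))

section LikelihoodRatio

variable {Ω ι : Type*} [MeasurableSpace Ω] {μ : Measure Ω} [Fintype ι] {Z : ι → Ω → ℝ}
  {σ P : ℝ}

lemma lintegral_likelihoodRatio (hZm : ∀ i, Measurable (Z i))
    (hZ : ∀ i, μ.map (Z i) = gaussianReal 0 1) (hindep : iIndepFun Z μ)
    (hσ : σ ≠ 0) (hP0 : 0 ≤ P) (hP : P < σ ^ 2) :
    ∫⁻ ω, ENNReal.ofReal (likelihoodRatio σ P (Fintype.card ι) (∑ i, Z i ω ^ 2)) ∂μ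
      = ENNReal.ofReal ((σ ^ 4 / (σ ^ 4 - P ^ 2)) ^ ((Fintype.card ι : ℝ) / 2)) := by
  have hσ2 : 0 < σ ^ 2 := by positivity
  have ht : P / (2 * σ ^ 2) < 1 / 2 := by
    rw [div_lt_iff₀ (by positivity)]
    linarith
  have hK : 0 ≤ (σ ^ 2 / (σ ^ 2 + P)) ^ ((Fintype.card ι : ℝ) / 2) := by
    have : 0 < σ ^ 2 + P := by linarith
    positivity
  simp only [likelihoodRatio, mul_div_right_comm P, ENNReal.ofReal_mul hK]
  rw [lintegral_const_mul' _ _ ENNReal.ofReal_ne_top, lintegral_exp_mul_sum_sq hZm hZ hindep ht,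
    ← ENNReal.ofReal_mul hK, ← mul_rpow (by positivity) (inv_nonneg.2 (by linarith))]
  have h1 : σ ^ 2 - P ≠ 0 := by linarith
  have h2 : σ ^ 2 + P ≠ 0 := by linarith
  have h3 : σ ^ 4 - P ^ 2 ≠ 0 := by
    rw [show σ ^ 4 - P ^ 2 = (σ ^ 2 - P) * (σ ^ 2 + P) by ring]
    exact mul_ne_zero h1 h2
  congr 2
  field_simp
  ring

lemma measure_abs_likelihoodRatio_div_ge_le (hZm : ∀ i, Measurable (Z i))
    (hZ : ∀ i, μ.map (Z i) = gaussianReal 0 1) (hindep : iIndepFun Z μ)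
    (hσ : σ ≠ 0) (hP0 : 0 ≤ P) (hP : P < σ ^ 2) {ε D : ℝ} (hε : 0 < ε) (hD : 0 < D) :
    μ {ω | ε ≤ |likelihoodRatio σ P (Fintype.card ι) (∑ i, Z i ω ^ 2) / D|}
      ≤ ENNReal.ofReal ((σ ^ 4 / (σ ^ 4 - P ^ 2)) ^ ((Fintype.card ι : ℝ) / 2) / (ε * D)) := by
  have hU : ∀ x, 0 ≤ likelihoodRatio σ P (Fintype.card ι) x := fun x => by
    have : 0 < σ ^ 2 + P := by positivity
    unfold likelihoodRatio; positivity
  have hUm : Measurable fun ω => ENNReal.ofReal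
      (likelihoodRatio σ P (Fintype.card ι) (∑ i, Z i ω ^ 2)) := by
    unfold likelihoodRatio; fun_prop
  calc μ {ω | ε ≤ |likelihoodRatio σ P (Fintype.card ι) (∑ i, Z i ω ^ 2) / D|}
      ≤ μ {ω | ENNReal.ofReal (ε * D)
          ≤ ENNReal.ofReal (likelihoodRatio σ P (Fintype.card ι) (∑ i, Z i ω ^ 2))} := by
        refine measure_mono fun ω hω => ?_
        rw [Set.mem_ofPred_eq, abs_of_nonneg (div_nonneg (hU _) hD.le), le_div_iff₀ hD] at hω
        exact ENNReal.ofReal_le_ofReal hω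
    _ ≤ (∫⁻ ω, ENNReal.ofReal
          (likelihoodRatio σ P (Fintype.card ι) (∑ i, Z i ω ^ 2)) ∂μ) / ENNReal.ofReal (ε * D) :=
        meas_ge_le_lintegral_div hUm.aemeasurable
          (ENNReal.ofReal_pos.2 (by positivity)).ne' ENNReal.ofReal_ne_top
    _ = _ := by
        rw [lintegral_likelihoodRatio hZm hZ hindep hσ hP0 hP,
          ENNReal.ofReal_div_of_pos (by positivity)]

end LikelihoodRatio

lemma exp_mul_le_one_sub_inv_rpow {x m : ℝ} (hx : x < 1) (hm : 0 ≤ m) :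
    exp (x * m) ≤ (1 - x)⁻¹ ^ m := by
  have h1x : 0 < 1 - x := by linarith
  rw [rpow_def_of_pos (inv_pos.2 h1x)]
  gcongr
  linarith [one_sub_inv_le_log_of_pos (inv_pos.2 h1x), inv_inv (1 - x)]

lemma one_sub_inv_rpow_le_exp {x m : ℝ} (hx0 : 0 ≤ x) (hx : x ≤ 1 / 2) (hm : 0 ≤ m) :
    (1 - x)⁻¹ ^ m ≤ exp (2 * x * m) := by
  have h1x : 0 < 1 - x := by linarith
  rw [rpow_def_of_pos (inv_pos.2 h1x)]
  gcongr
  calc log (1 - x)⁻¹ ≤ (1 - x)⁻¹ - 1 := log_le_sub_one_of_pos (inv_pos.2 h1x)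
    _ = x / (1 - x) := by field_simp; ring
    _ ≤ 2 * x := by rw [div_le_iff₀ h1x]; nlinarith

lemma div_sqrt_sub_one_mul_sqrt_sub_one_le {a b : ℝ} (ha : 2 ≤ a) (hb : 2 ≤ b) :
    a / (√(a - 1) * √(b - 1)) ≤ 2 * √(a / b) := by
  have hle : √(a / 2) * √(b / 2) ≤ √(a - 1) * √(b - 1) := by
    gcongr <;> linarith
  calc a / (√(a - 1) * √(b - 1)) ≤ a / (√(a / 2) * √(b / 2)) := by
        gcongr
    _ = 2 * √(a / b) := by
        rw [sqrt_div (by linarith), sqrt_div (by linarith), sqrt_div (by linarith)]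
        have : 0 < √a := sqrt_pos.2 (by linarith)
        have : 0 < √b := sqrt_pos.2 (by linarith)
        field_simp
        rw [sq_sqrt (by norm_num), sq_sqrt (by linarith)]

lemma measure_abs_likelihoodRatio_div_ge_le_exp {Ω : Type*} [MeasurableSpace Ω] {μ : Measure Ω}
    {n : ℕ} {Z : Fin n → Ω → ℝ} (hZm : ∀ i, Measurable (Z i))
    (hZ : ∀ i, μ.map (Z i) = gaussianReal 0 1) (hindep : iIndepFun Z μ)
    {σ c t ε : ℝ} (hσ : σ ≠ 0) (hc : 0 ≤ c) (hε : 0 < ε) (hn : 0 < n) (ht : 2 ≤ t)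
    (hq : c ^ 2 * (log t / n) ≤ 1 / 2) (hA : 2 * log 2 ≤ c ^ 2 * log t) :
    μ {ω | ε ≤ |likelihoodRatio σ (c * σ ^ 2 * √(log t / n)) n (∑ i, Z i ω ^ 2)
        / (√((σ ^ 4 / (σ ^ 4 - (c * σ ^ 2 * √(log t / n)) ^ 2)) ^ ((n : ℝ) / 2) - 1)
          * √(t - 1))|}
      ≤ ENNReal.ofReal (2 / ε * exp ((c ^ 2 - 1) * log t / 2)) := by
  have hL : 0 < log t := log_pos (by linarith)
  have hn' : (0 : ℝ) < n := Nat.cast_pos.2 hn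
  set q := log t / n with hq_def
  have hq0 : 0 ≤ q := by positivity
  set P := c * σ ^ 2 * √q with hP_def
  have hP2 : P ^ 2 = c ^ 2 * q * σ ^ 4 := by
    rw [hP_def, mul_pow, mul_pow, sq_sqrt hq0]; ring
  have hP0 : 0 ≤ P := by positivity
  have hP : P < σ ^ 2 := by
    have hσ4 : 0 < σ ^ 4 := by positivity
    have : P ^ 2 < (σ ^ 2) ^ 2 := by
      calc P ^ 2 = c ^ 2 * q * σ ^ 4 := hP2
        _ ≤ 1 / 2 * σ ^ 4 := by gcongr
        _ < (σ ^ 2) ^ 2 := by linarith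
    exact lt_of_pow_lt_pow_left₀ 2 (by positivity) this
  have hratio : σ ^ 4 / (σ ^ 4 - P ^ 2) = (1 - c ^ 2 * q)⁻¹ := by
    rw [hP2]
    have : σ ^ 4 ≠ 0 := by positivity
    field_simp
  have hexponent : c ^ 2 * q * ((n : ℝ) / 2) = c ^ 2 * log t / 2 := by
    rw [hq_def]; field_simp
  set A := (1 - c ^ 2 * q)⁻¹ ^ ((n : ℝ) / 2)
  have hA_upper : A ≤ exp (c ^ 2 * log t) := by
    calc A ≤ exp (2 * (c ^ 2 * q) * ((n : ℝ) / 2)) :=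
          one_sub_inv_rpow_le_exp (by positivity) hq (by positivity)
      _ = exp (c ^ 2 * log t) := by rw [mul_assoc, hexponent]; ring_nf
  have hA_two : 2 ≤ A := by
    calc (2 : ℝ) = exp (log 2) := (exp_log two_pos).symm
      _ ≤ exp (c ^ 2 * q * ((n : ℝ) / 2)) := by rw [hexponent]; gcongr; linarith
      _ ≤ A := exp_mul_le_one_sub_inv_rpow (by linarith) (by positivity)
  have hD : 0 < √(A - 1) * √(t - 1) := by
    have : 0 < A - 1 := by linarith
    have : 0 < t - 1 := by linarith
    positivity
  have hmarkov := measure_abs_likelihoodRatio_div_ge_le hZm hZ hindep hσ hP0 hP hε hD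
  rw [Fintype.card_fin, hratio] at hmarkov
  rw [hratio]
  refine hmarkov.trans (ENNReal.ofReal_le_ofReal ?_)
  calc A / (ε * (√(A - 1) * √(t - 1))) = (A / (√(A - 1) * √(t - 1))) / ε := by ring
    _ ≤ 2 * √(A / t) / ε := by gcongr; exact div_sqrt_sub_one_mul_sqrt_sub_one_le hA_two ht
    _ ≤ 2 * √(exp (c ^ 2 * log t) / exp (log t)) / ε := by
        rw [exp_log (by linarith)]; gcongr
    _ = 2 / ε * exp ((c ^ 2 - 1) * log t / 2) := by
        rw [← exp_sub, ← exp_half]; ring_nf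

theorem stmt_10_general
    (σ c : ℝ) (hσ : 0 < σ) (hc0 : 0 < c) (hc1 : c < 1)
    (T : ℕ → ℝ) (hT : Tendsto T atTop atTop)
    (hlog : Tendsto (fun n => Real.log (T n) / n) atTop (nhds 0))
    (Ω : ℕ → Type) [∀ n, MeasurableSpace (Ω n)]
    (μ : ∀ n, Measure (Ω n))
    (Z : ∀ n, Fin n → Ω n → ℝ) (hZm : ∀ n i, Measurable (Z n i))
    (hZ : ∀ n i, (μ n).map (Z n i) = gaussianReal 0 1)
    (hindep : ∀ n, iIndepFun (Z n) (μ n)) :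
    ∀ ε : ℝ, 0 < ε →
      Tendsto (fun n => μ n {ω | ε ≤
        |((σ ^ 2 / (σ ^ 2 + c * σ ^ 2 * Real.sqrt (Real.log (T n) / n))) ^ ((n : ℝ) / 2)
            * Real.exp ((c * σ ^ 2 * Real.sqrt (Real.log (T n) / n))
                * (∑ i, Z n i ω ^ 2) / (2 * σ ^ 2)))
          / (Real.sqrt ((σ ^ 4 / (σ ^ 4 - (c * σ ^ 2 * Real.sqrt (Real.log (T n) / n)) ^ 2))
                ^ ((n : ℝ) / 2) - 1)
              * Real.sqrt (T n - 1))|})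
        atTop (nhds 0) := by
  intro ε hε
  have hc2 : 0 < c ^ 2 := by positivity
  have hL : Tendsto (fun n => log (T n)) atTop atTop := tendsto_log_atTop.comp hT
  have hbound : Tendsto (fun n => ENNReal.ofReal (2 / ε * exp ((c ^ 2 - 1) * log (T n) / 2)))
      atTop (nhds 0) := by
    have hexp : Tendsto (fun n => (c ^ 2 - 1) * log (T n) / 2) atTop atBot :=
      (hL.const_mul_atTop_of_neg (by nlinarith)).atBot_div_const two_pos
    simpa using ENNReal.tendsto_ofReal ((tendsto_exp_atBot.comp hexp).const_mul (2 / ε))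
  refine tendsto_of_tendsto_of_tendsto_of_le_of_le' tendsto_const_nhds hbound
    (Eventually.of_forall fun _ => zero_le) ?_
  filter_upwards [eventually_gt_atTop 0, hT.eventually_ge_atTop 2,
    hlog.eventually (eventually_le_nhds (by positivity : 0 < 1 / (2 * c ^ 2))),
    hL.eventually_ge_atTop (2 * log 2 / c ^ 2)] with n hn ht hq hA
  refine measure_abs_likelihoodRatio_div_ge_le_exp (hZm n) (hZ n) (hindep n) hσ.ne' hc0.le hε hn ht
    ?_ ?_
  · exact (mul_le_mul_of_nonneg_left hq hc2.le).trans_eq (by field_simp)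
  · rw [div_le_iff₀ hc2] at hA
    linarith

/-- If `σ > 0`, `c ∈ (0,1)`, `T n → ∞`, `log (T n) / n → 0`, `Xₙ = Σᵢ Z_{n,i}²` is
chi-squared with `n` degrees of freedom, `Pₙ = c σ² √(log (T n) / n)`,
`U₁ₙ = (σ²/(σ²+Pₙ))^(n/2) exp (Pₙ Xₙ/(2σ²))` and `sₙ = √((σ⁴/(σ⁴-Pₙ²))^(n/2) - 1)`,
then `U₁ₙ / (sₙ √(T n - 1)) → 0` in probability. -/
theorem stmt_10
    (σ c : ℝ) (hσ : 0 < σ) (hc0 : 0 < c) (hc1 : c < 1)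
    (T : ℕ → ℝ) (hT : Tendsto T atTop atTop)
    (hlog : Tendsto (fun n => Real.log (T n) / n) atTop (nhds 0))
    (Ω : ℕ → Type) [∀ n, MeasurableSpace (Ω n)]
    (μ : ∀ n, Measure (Ω n)) [∀ n, IsProbabilityMeasure (μ n)]
    (Z : ∀ n, Fin n → Ω n → ℝ) (hZm : ∀ n i, Measurable (Z n i))
    (hZ : ∀ n i, (μ n).map (Z n i) = gaussianReal 0 1)
    (hindep : ∀ n, iIndepFun (Z n) (μ n)) :
    ∀ ε : ℝ, 0 < ε →
      Tendsto (fun n => μ n {ω | ε ≤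
        |((σ ^ 2 / (σ ^ 2 + c * σ ^ 2 * Real.sqrt (Real.log (T n) / n))) ^ ((n : ℝ) / 2)
            * Real.exp ((c * σ ^ 2 * Real.sqrt (Real.log (T n) / n))
                * (∑ i, Z n i ω ^ 2) / (2 * σ ^ 2)))
          / (Real.sqrt ((σ ^ 4 / (σ ^ 4 - (c * σ ^ 2 * Real.sqrt (Real.log (T n) / n)) ^ 2))
                ^ ((n : ℝ) / 2) - 1)
              * Real.sqrt (T n - 1))|})
        atTop (nhds 0) :=
  stmt_10_general σ c hσ hc0 hc1 T hT hlog Ω μ Z hZm hZ hindep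
end

section
/- Let σ > 0 and c ∈ (0,1). Let T : ℕ → ℝ satisfy T(n) → ∞ and (log T(n))/n → 0 as n → ∞. Define aₙ² = c·σ²·√((log T(n))/(2n)). Then T(n) · (cosh(2aₙ²/σ²))^{−n} → ∞ as n → ∞. -/
/-!
Since `cosh y ≤ exp (y ^ 2 / 2)`, the factor `cosh (2 aₙ² / σ²) ^ (-n)` is at least
`exp (-n · (2 aₙ² / σ²)² / 2)`, and the choice of `aₙ` makes this exponent exactly `-c² log T(n)`.
Hence the quantity dominates `T(n) ^ (1 - c²)`, which tends to infinity because `c² < 1`.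
-/

open Filter Real

lemma exp_neg_mul_half_sq_le_cosh_rpow_neg (y : ℝ) {t : ℝ} (ht : 0 ≤ t) :
    exp (-(t * (y ^ 2 / 2))) ≤ cosh y ^ (-t) := by
  rw [show -(t * (y ^ 2 / 2)) = y ^ 2 / 2 * -t by ring, exp_mul]
  exact rpow_le_rpow_of_nonpos (cosh_pos y) (cosh_le_exp_half_sq y) (neg_nonpos.mpr ht)

lemma rpow_one_sub_sq_le_mul_cosh_rpow_neg {x y t k : ℝ} (hx : 0 < x) (ht : 0 ≤ t)
    (hty : t * (y ^ 2 / 2) = k ^ 2 * log x) :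
    x ^ (1 - k ^ 2) ≤ x * cosh y ^ (-t) := by
  calc x ^ (1 - k ^ 2) = x * exp (-(t * (y ^ 2 / 2))) := by
        rw [sub_eq_add_neg, rpow_add hx, rpow_one, rpow_def_of_pos hx, hty]
        ring_nf
    _ ≤ x * cosh y ^ (-t) :=
        mul_le_mul_of_nonneg_left (exp_neg_mul_half_sq_le_cosh_rpow_neg y ht) hx.le

lemma mul_half_sq_two_mul_sqrt_div_eq {σ c L n : ℝ} (hσ : σ ≠ 0) (hL : 0 ≤ L) (hn : 0 < n) :
    n * ((2 * (c * σ ^ 2 * √(L / (2 * n))) / σ ^ 2) ^ 2 / 2) = c ^ 2 * L := by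
  rw [div_pow, mul_pow, mul_pow, mul_pow, sq_sqrt (by positivity)]
  field_simp

theorem stmt_12_general (σ c : ℝ) (hσ : 0 < σ) (hc0 : 0 < c) (hc1 : c < 1)
    (T : ℕ → ℝ) (hT : Tendsto T atTop atTop) :
    Tendsto (fun n =>
      T n * Real.cosh (2 * (c * σ ^ 2 * Real.sqrt (Real.log (T n) / (2 * n))) / σ ^ 2)
        ^ (-(n : ℝ)))
      atTop atTop := by
  have hpow : Tendsto (fun n => T n ^ (1 - c ^ 2)) atTop atTop :=
    (tendsto_rpow_atTop (by nlinarith)).comp hT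
  refine tendsto_atTop_mono' atTop ?_ hpow
  filter_upwards [hT.eventually_ge_atTop 1, eventually_gt_atTop 0] with n hT1 hn
  exact rpow_one_sub_sq_le_mul_cosh_rpow_neg (by linarith) n.cast_nonneg
    (mul_half_sq_two_mul_sqrt_div_eq hσ.ne' (log_nonneg hT1) (Nat.cast_pos.mpr hn))

/-- If `σ > 0`, `c ∈ (0,1)`, `T n → ∞`, `log (T n) / n → 0`, and
`aₙ² = c σ² √(log (T n) / (2n))`, then `T n * (cosh (2 aₙ²/σ²))^(-n) → ∞`. -/
theorem stmt_12 (σ c : ℝ) (hσ : 0 < σ) (hc0 : 0 < c) (hc1 : c < 1)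
    (T : ℕ → ℝ) (hT : Tendsto T atTop atTop)
    (hlog : Tendsto (fun n => Real.log (T n) / n) atTop (nhds 0)) :
    Tendsto (fun n =>
      T n * Real.cosh (2 * (c * σ ^ 2 * Real.sqrt (Real.log (T n) / (2 * n))) / σ ^ 2)
        ^ (-(n : ℝ)))
      atTop atTop :=
  stmt_12_general σ c hσ hc0 hc1 T hT
end

section
/- Let n ≥ 1, a ∈ ℝ, σ > 0, and let z₁,…,zₙ be i.i.d. Gaussian random variables with mean 0 and variance σ². Define U = exp(−na²/(2σ²)) · (1/2ⁿ) · Σ_{b ∈ {−1,1}ⁿ} exp((a/σ²)·Σ_{i=1}^{n} zᵢbᵢ). Then E[U] = 1 and E[U²] = (cosh(a²/σ²))ⁿ. -/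
/-!
For a sign vector `b`, the variable `∑ i, zᵢ bᵢ` is a centred Gaussian of variance `n σ²`, so
`E[exp (t ∑ i, zᵢ bᵢ)] = exp (n σ² t² / 2)` and `E[U] = 1`. Squaring `U` produces a double
sum over pairs `(b, d)`, where `∑ i, zᵢ (bᵢ + dᵢ)` has variance
`σ² ∑ i, (bᵢ + dᵢ)² = 2 n σ² + 2 σ² ⟨b, d⟩`. With `κ = a² / σ²`, what remains is
`∑_{b, d} exp (κ ⟨b, d⟩)`, which factorizes over the coordinates into
`∏ i, ∑_{x, y = ±1} exp (κ x y) = (4 cosh κ)ⁿ`.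
-/

open MeasureTheory ProbabilityTheory Finset Real
open scoped NNReal

section SignVectors

variable {ι : Type*} [Fintype ι] [DecidableEq ι]

lemma card_piFinset_signs :
    #(Fintype.piFinset fun _ : ι => ({-1, 1} : Finset ℝ)) = 2 ^ Fintype.card ι := by
  rw [Fintype.card_piFinset, prod_const, card_pair (by norm_num), card_univ]

lemma sum_piFinset_signs_exp_sum_mul (f : ι → ℝ) :
    ∑ b ∈ Fintype.piFinset (fun _ : ι => ({-1, 1} : Finset ℝ)), exp (∑ i, b i * f i)
      = ∏ i, 2 * cosh (f i) := by
  simp_rw [Real.exp_sum]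
  rw [← prod_univ_sum (fun _ => ({-1, 1} : Finset ℝ)) (fun i x => exp (x * f i))]
  refine prod_congr rfl fun i _ => ?_
  rw [sum_pair (by norm_num), cosh_eq]
  ring_nf

variable {b d : ι → ℝ}

lemma eq_neg_one_or_eq_one_of_mem_piFinset_signs
    (hb : b ∈ Fintype.piFinset fun _ : ι => ({-1, 1} : Finset ℝ)) (i : ι) :
    b i = -1 ∨ b i = 1 := by
  simpa using Fintype.mem_piFinset.mp hb i

lemma sum_sq_of_mem_piFinset_signs
    (hb : b ∈ Fintype.piFinset fun _ : ι => ({-1, 1} : Finset ℝ)) :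
    ∑ i, b i ^ 2 = Fintype.card ι := by
  have h i : b i ^ 2 = 1 := by
    rcases eq_neg_one_or_eq_one_of_mem_piFinset_signs hb i with h | h <;> simp [h]
  simp [h]

lemma sum_add_sq_of_mem_piFinset_signs
    (hb : b ∈ Fintype.piFinset fun _ : ι => ({-1, 1} : Finset ℝ))
    (hd : d ∈ Fintype.piFinset fun _ : ι => ({-1, 1} : Finset ℝ)) :
    ∑ i, (b i + d i) ^ 2 = 2 * Fintype.card ι + 2 * ∑ i, b i * d i := by
  simp only [add_sq, sum_add_distrib, sum_sq_of_mem_piFinset_signs hb,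
    sum_sq_of_mem_piFinset_signs hd, mul_assoc, ← mul_sum]
  ring

lemma sum_piFinset_signs_sum_piFinset_signs_exp (κ : ℝ) :
    ∑ b ∈ Fintype.piFinset (fun _ : ι => ({-1, 1} : Finset ℝ)),
      ∑ d ∈ Fintype.piFinset (fun _ : ι => ({-1, 1} : Finset ℝ)), exp (κ * ∑ i, b i * d i)
      = 2 ^ Fintype.card ι * (2 * cosh κ) ^ Fintype.card ι := by
  have hinner : ∀ b ∈ Fintype.piFinset (fun _ : ι => ({-1, 1} : Finset ℝ)),
      ∑ d ∈ Fintype.piFinset (fun _ : ι => ({-1, 1} : Finset ℝ)), exp (κ * ∑ i, b i * d i)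
        = (2 * cosh κ) ^ Fintype.card ι := by
    intro b hb
    have hcosh i : cosh (κ * b i) = cosh κ := by
      rcases eq_neg_one_or_eq_one_of_mem_piFinset_signs hb i with h | h <;> simp [h]
    have hswap (d : ι → ℝ) : κ * ∑ i, b i * d i = ∑ i, d i * (κ * b i) := by
      rw [mul_sum]; exact sum_congr rfl fun i _ => by ring
    simp_rw [hswap, sum_piFinset_signs_exp_sum_mul, hcosh, prod_const, card_univ]
  rw [sum_congr rfl hinner, sum_const, card_piFinset_signs, nsmul_eq_mul, Nat.cast_pow,
    Nat.cast_ofNat]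

end SignVectors

section IndependentGaussians

variable {Ω ι : Type*} [MeasurableSpace Ω] {μ : Measure Ω} [Fintype ι] {v : ℝ≥0}
  {z : ι → Ω → ℝ}

lemma mgf_sum_mul_of_iIndepFun_gaussianReal (hzm : ∀ i, Measurable (z i))
    (hz : ∀ i, μ.map (z i) = gaussianReal 0 v) (hindep : iIndepFun z μ) (w : ι → ℝ) (t : ℝ) :
    mgf (fun ω => ∑ i, z i ω * w i) μ t = exp (v * t ^ 2 * (∑ i, w i ^ 2) / 2) := by
  have hindep' : iIndepFun (fun i ω => z i ω * w i) μ :=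
    hindep.comp (fun i x => x * w i) fun i => measurable_mul_const _
  have hmgf i : mgf (fun ω => z i ω * w i) μ t = exp (v * (w i * t) ^ 2 / 2) := by
    simp_rw [mul_comm (z i _), mgf_const_mul, mgf_gaussianReal (hz i), zero_mul, zero_add]
  have hsum : (fun ω => ∑ i, z i ω * w i) = ∑ i, fun ω => z i ω * w i := by
    ext ω; simp
  rw [hsum, hindep'.mgf_sum (fun i => (hzm i).mul_const _), prod_congr rfl fun i _ => hmgf i,
    ← Real.exp_sum, mul_sum, sum_div]
  exact congrArg exp (sum_congr rfl fun i _ => by ring)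

lemma integrable_exp_mul_sum_mul_of_iIndepFun_gaussianReal (hzm : ∀ i, Measurable (z i))
    (hz : ∀ i, μ.map (z i) = gaussianReal 0 v) (hindep : iIndepFun z μ) (w : ι → ℝ) (t : ℝ) :
    Integrable (fun ω => exp (t * ∑ i, z i ω * w i)) μ := by
  have := hindep.isProbabilityMeasure
  rw [← mgf_pos_iff (X := fun ω => ∑ i, z i ω * w i),
    mgf_sum_mul_of_iIndepFun_gaussianReal hzm hz hindep]
  exact exp_pos _

variable [DecidableEq ι] {b d : ι → ℝ}

lemma integral_exp_mul_sum_mul_of_mem_piFinset_signs (hzm : ∀ i, Measurable (z i))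
    (hz : ∀ i, μ.map (z i) = gaussianReal 0 v) (hindep : iIndepFun z μ)
    (hb : b ∈ Fintype.piFinset fun _ : ι => ({-1, 1} : Finset ℝ)) (t : ℝ) :
    ∫ ω, exp (t * ∑ i, z i ω * b i) ∂μ = exp (Fintype.card ι * (v * t ^ 2) / 2) := by
  change mgf (fun ω => ∑ i, z i ω * b i) μ t = _
  rw [mgf_sum_mul_of_iIndepFun_gaussianReal hzm hz hindep, sum_sq_of_mem_piFinset_signs hb]
  ring_nf

lemma integral_exp_mul_sum_mul_add_of_mem_piFinset_signs (hzm : ∀ i, Measurable (z i))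
    (hz : ∀ i, μ.map (z i) = gaussianReal 0 v) (hindep : iIndepFun z μ)
    (hb : b ∈ Fintype.piFinset fun _ : ι => ({-1, 1} : Finset ℝ))
    (hd : d ∈ Fintype.piFinset fun _ : ι => ({-1, 1} : Finset ℝ)) (t : ℝ) :
    ∫ ω, exp (t * ∑ i, z i ω * (b i + d i)) ∂μ
      = exp (Fintype.card ι * (v * t ^ 2)) * exp (v * t ^ 2 * ∑ i, b i * d i) := by
  change mgf (fun ω => ∑ i, z i ω * (b i + d i)) μ t = _
  rw [mgf_sum_mul_of_iIndepFun_gaussianReal hzm hz hindep,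
    sum_add_sq_of_mem_piFinset_signs hb hd, ← exp_add]
  ring_nf

variable (t : ℝ)

lemma integral_sum_piFinset_signs_exp (hzm : ∀ i, Measurable (z i))
    (hz : ∀ i, μ.map (z i) = gaussianReal 0 v) (hindep : iIndepFun z μ) :
    ∫ ω, ∑ b ∈ Fintype.piFinset (fun _ : ι => ({-1, 1} : Finset ℝ)),
        exp (t * ∑ i, z i ω * b i) ∂μ
      = 2 ^ Fintype.card ι * exp (Fintype.card ι * (v * t ^ 2) / 2) := by
  rw [integral_finsetSum _ fun b _ =>
      integrable_exp_mul_sum_mul_of_iIndepFun_gaussianReal hzm hz hindep b t,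
    sum_congr rfl fun b hb => integral_exp_mul_sum_mul_of_mem_piFinset_signs hzm hz hindep hb t,
    sum_const, card_piFinset_signs, nsmul_eq_mul, Nat.cast_pow, Nat.cast_ofNat]

lemma integral_sq_sum_piFinset_signs_exp (hzm : ∀ i, Measurable (z i))
    (hz : ∀ i, μ.map (z i) = gaussianReal 0 v) (hindep : iIndepFun z μ) :
    ∫ ω, (∑ b ∈ Fintype.piFinset (fun _ : ι => ({-1, 1} : Finset ℝ)),
        exp (t * ∑ i, z i ω * b i)) ^ 2 ∂μ
      = exp (Fintype.card ι * (v * t ^ 2)) *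
          (2 ^ Fintype.card ι * (2 * cosh (v * t ^ 2)) ^ Fintype.card ι) := by
  have hint (w : ι → ℝ) := integrable_exp_mul_sum_mul_of_iIndepFun_gaussianReal hzm hz hindep w t
  have hsq (ω : Ω) : (∑ b ∈ Fintype.piFinset (fun _ : ι => ({-1, 1} : Finset ℝ)),
        exp (t * ∑ i, z i ω * b i)) ^ 2
      = ∑ b ∈ Fintype.piFinset (fun _ : ι => ({-1, 1} : Finset ℝ)),
          ∑ d ∈ Fintype.piFinset (fun _ : ι => ({-1, 1} : Finset ℝ)),
            exp (t * ∑ i, z i ω * (b i + d i)) := by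
    simp_rw [sq, sum_mul_sum, ← exp_add, ← mul_add, ← sum_add_distrib, ← mul_add]
  simp_rw [hsq]
  rw [integral_finsetSum _ fun b _ => integrable_finsetSum _ fun d _ => hint _,
    sum_congr rfl fun b hb => (integral_finsetSum _ fun d _ => hint _).trans
      (sum_congr rfl fun d hd =>
        integral_exp_mul_sum_mul_add_of_mem_piFinset_signs hzm hz hindep hb hd t),
    ← sum_piFinset_signs_sum_piFinset_signs_exp, mul_sum]
  simp_rw [mul_sum]

end IndependentGaussians

theorem stmt_13_general
    {Ω : Type} [MeasurableSpace Ω] (μ : Measure Ω)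
    (n : ℕ) (a σ : ℝ)
    (z : Fin n → Ω → ℝ) (hzm : ∀ i, Measurable (z i))
    (hz : ∀ i, μ.map (z i) = gaussianReal 0 ⟨σ ^ 2, sq_nonneg σ⟩)
    (hindep : iIndepFun z μ) :
    (∫ ω, Real.exp (-(n * a ^ 2) / (2 * σ ^ 2)) * ((1 / 2 ^ n) *
        ∑ b ∈ Fintype.piFinset (fun _ : Fin n => ({-1, 1} : Finset ℝ)),
          Real.exp ((a / σ ^ 2) * ∑ i, z i ω * b i)) ∂μ) = 1
    ∧ (∫ ω, (Real.exp (-(n * a ^ 2) / (2 * σ ^ 2)) * ((1 / 2 ^ n) *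
        ∑ b ∈ Fintype.piFinset (fun _ : Fin n => ({-1, 1} : Finset ℝ)),
          Real.exp ((a / σ ^ 2) * ∑ i, z i ω * b i))) ^ 2 ∂μ)
      = Real.cosh (a ^ 2 / σ ^ 2) ^ n := by
  set v : ℝ≥0 := ⟨σ ^ 2, sq_nonneg σ⟩
  have hκ : (v : ℝ) * (a / σ ^ 2) ^ 2 = a ^ 2 / σ ^ 2 := by
    -- for `σ = 0` both sides are `0`, as division by zero is `0`
    change σ ^ 2 * _ = _
    rcases eq_or_ne σ 0 with rfl | hσ
    · simp
    · field_simp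
  have hinv : (1 / 2 ^ n : ℝ) * 2 ^ n = 1 := one_div_mul_cancel (by positivity)
  constructor
  · rw [integral_const_mul, integral_const_mul, integral_sum_piFinset_signs_exp _ hzm hz hindep,
      Fintype.card_fin, hκ, ← mul_assoc _ (2 ^ n : ℝ), hinv, one_mul, ← exp_add,
      exp_eq_one_iff]
    ring
  · have he : exp (-(n * a ^ 2) / (2 * σ ^ 2)) ^ 2 * exp (n * (a ^ 2 / σ ^ 2)) = 1 := by
      rw [← exp_nat_mul, ← exp_add, exp_eq_one_iff]
      push_cast
      ring
    simp_rw [mul_pow]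
    rw [integral_const_mul, integral_const_mul,
      integral_sq_sum_piFinset_signs_exp _ hzm hz hindep, Fintype.card_fin, hκ]
    linear_combination ((1 / 2 ^ n) ^ 2 * (2 ^ n) ^ 2 * cosh (a ^ 2 / σ ^ 2) ^ n) * he
      + ((1 / 2 ^ n) * 2 ^ n + 1) * cosh (a ^ 2 / σ ^ 2) ^ n * hinv

/-- For `z₁,…,zₙ` i.i.d. Gaussian with mean `0` and variance `σ²`, and
`U = exp (-n a²/(2σ²)) (1/2ⁿ) Σ_{b ∈ {-1,1}ⁿ} exp ((a/σ²) Σᵢ zᵢ bᵢ)`,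
one has `E[U] = 1` and `E[U²] = cosh (a²/σ²) ^ n`. -/
theorem stmt_13
    {Ω : Type} [MeasurableSpace Ω] (μ : Measure Ω) [IsProbabilityMeasure μ]
    (n : ℕ) (hn : 1 ≤ n) (a σ : ℝ) (hσ : 0 < σ)
    (z : Fin n → Ω → ℝ) (hzm : ∀ i, Measurable (z i))
    (hz : ∀ i, μ.map (z i) = gaussianReal 0 ⟨σ ^ 2, sq_nonneg σ⟩)
    (hindep : iIndepFun z μ) :
    (∫ ω, Real.exp (-(n * a ^ 2) / (2 * σ ^ 2)) * ((1 / 2 ^ n) *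
        ∑ b ∈ Fintype.piFinset (fun _ : Fin n => ({-1, 1} : Finset ℝ)),
          Real.exp ((a / σ ^ 2) * ∑ i, z i ω * b i)) ∂μ) = 1
    ∧ (∫ ω, (Real.exp (-(n * a ^ 2) / (2 * σ ^ 2)) * ((1 / 2 ^ n) *
        ∑ b ∈ Fintype.piFinset (fun _ : Fin n => ({-1, 1} : Finset ℝ)),
          Real.exp ((a / σ ^ 2) * ∑ i, z i ω * b i))) ^ 2 ∂μ)
      = Real.cosh (a ^ 2 / σ ^ 2) ^ n :=
  stmt_13_general μ n a σ z hzm hz hindep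
end

section
/- Let n ≥ 1, a ∈ ℝ, σ > 0. Let z₁,…,zₙ be i.i.d. Gaussian random variables with mean 0 and variance σ², and let C = (C₁,…,Cₙ) be uniformly distributed on {−1,1}ⁿ and independent of (z₁,…,zₙ). Define yᵢ = a·Cᵢ + zᵢ and U = exp(−na²/(2σ²)) · (1/2ⁿ) · Σ_{b ∈ {−1,1}ⁿ} exp((a/σ²)·Σ_{i=1}^{n} yᵢbᵢ). Then E[U] = (cosh(a²/σ²))ⁿ. -/
/-!
Expanding the average over `b`, each summand factors, by independence of `C` and `z`, into
`𝔼 exp (s ⟨b, C⟩) · 𝔼 exp (t ⟨b, z⟩)` with `s = a²/σ²` and `t = a/σ²`. For `b ∈ {-1,1}ⁿ` the first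
factor is `coshⁿ s`, since the sum over the sign cube factors coordinatewise, and the second is
the Gaussian moment generating function `exp (n a²/(2σ²))`, which cancels the normalising
prefactor; all `2ⁿ` summands are then equal.
-/

open MeasureTheory ProbabilityTheory Finset Real
open scoped NNReal ENNReal

noncomputable def signCube (ι : Type*) [Fintype ι] [DecidableEq ι] : Finset (ι → ℝ) :=
  Fintype.piFinset fun _ => {-1, 1}

section SignCube

variable {ι : Type*} [Fintype ι] [DecidableEq ι]

lemma mem_signCube {c : ι → ℝ} : c ∈ signCube ι ↔ ∀ i, c i = -1 ∨ c i = 1 := by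
  simp [signCube]

lemma card_signCube : #(signCube ι) = 2 ^ Fintype.card ι := by
  simp [signCube, card_pair (show (-1 : ℝ) ≠ 1 by norm_num)]

lemma sum_signCube_exp_sum_mul (x : ι → ℝ) :
    ∑ c ∈ signCube ι, exp (∑ i, x i * c i) = ∏ i, 2 * cosh (x i) := by
  simp_rw [exp_sum]
  rw [signCube, ← prod_univ_sum (fun _ => {-1, 1}) fun i c => exp (x i * c)]
  refine prod_congr rfl fun i _ => ?_
  rw [sum_pair (by norm_num), cosh_eq]
  ring_nf

end SignCube

variable {Ω : Type*} [MeasurableSpace Ω] {μ : Measure Ω}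

lemma integral_comp_of_map_eq_smul_sum_dirac {α : Type*} [MeasurableSpace α]
    [MeasurableSingletonClass α] {X : Ω → α} (hX : AEMeasurable X μ) {w : ℝ≥0∞} (hw : w ≠ ∞)
    {S : Finset α} (hmap : μ.map X = w • ∑ c ∈ S, Measure.dirac c) (f : α → ℝ) :
    ∫ ω, f (X ω) ∂μ = w.toReal * ∑ c ∈ S, f c := by
  have hdirac : ∀ c ∈ S, Integrable f (Measure.dirac c) := fun c _ => integrable_dirac (by simp)
  have hint : Integrable f (μ.map X) := by
    rw [hmap]
    exact (integrable_finsetSum_measure.mpr hdirac).smul_measure hw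
  rw [← integral_map hX hint.aestronglyMeasurable, hmap, integral_smul_measure,
    integral_finsetSum_measure hdirac]
  simp

lemma mgf_sum_mul_of_map_eq_uniform_signCube {n : ℕ} {C : Ω → Fin n → ℝ}
    (hC : AEMeasurable C μ)
    (hmap : μ.map C = ((2 : ℝ≥0∞) ^ n)⁻¹ • ∑ c ∈ signCube (Fin n), Measure.dirac c)
    (b : Fin n → ℝ) (s : ℝ) :
    mgf (fun ω => ∑ i, b i * C ω i) μ s = ∏ i, cosh (s * b i) := by
  rw [mgf, integral_comp_of_map_eq_smul_sum_dirac hC (by simp) hmap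
    (fun c => exp (s * ∑ i, b i * c i))]
  have hlin (c : Fin n → ℝ) : s * ∑ i, b i * c i = ∑ i, s * b i * c i := by
    simp_rw [mul_sum, mul_assoc]
  simp_rw [hlin]
  rw [sum_signCube_exp_sum_mul, prod_mul_distrib, prod_const, card_univ, Fintype.card_fin]
  simp [ENNReal.toReal_inv]

lemma mgf_sum_mul_of_map_eq_gaussianReal {ι : Type*} [Fintype ι] {z : ι → Ω → ℝ} {v : ℝ≥0}
    (hz : ∀ i, μ.map (z i) = gaussianReal 0 v) (hind : iIndepFun z μ) (b : ι → ℝ) (t : ℝ) :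
    mgf (fun ω => ∑ i, b i * z i ω) μ t = exp (v * t ^ 2 / 2 * ∑ i, b i ^ 2) := by
  have hmeas : ∀ i, AEMeasurable (fun ω => b i * z i ω) μ := fun i =>
    (aemeasurable_of_map_neZero (by rw [hz i]; infer_instance)).const_mul (b i)
  have hind' : iIndepFun (fun i ω => b i * z i ω) μ :=
    hind.comp _ fun i => measurable_const_mul (b i)
  calc mgf (fun ω => ∑ i, b i * z i ω) μ t = mgf (∑ i, fun ω => b i * z i ω) μ t := by
        simp_rw [← Finset.sum_fn]
    _ = ∏ i, mgf (fun ω => b i * z i ω) μ t := hind'.mgf_sum₀ hmeas _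
    _ = ∏ i, exp (v * (b i * t) ^ 2 / 2) := by
        simp_rw [mgf_const_mul, mgf_gaussianReal (hz _), zero_mul, zero_add]
    _ = exp (v * t ^ 2 / 2 * ∑ i, b i ^ 2) := by
        rw [← exp_sum, mul_sum]
        exact congrArg exp (sum_congr rfl fun i _ => by ring)

lemma ProbabilityTheory.IndepFun.integral_exp_mul_mul_exp_mul [IsProbabilityMeasure μ]
    {X Y : Ω → ℝ} (h : X ⟂ᵢ[μ] Y) {s t : ℝ} (hX : 0 < mgf X μ s) (hY : 0 < mgf Y μ t) :
    Integrable (fun ω => exp (s * X ω) * exp (t * Y ω)) μ ∧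
      ∫ ω, exp (s * X ω) * exp (t * Y ω) ∂μ = mgf X μ s * mgf Y μ t := by
  have hX' := mgf_pos_iff.mp hX
  have hY' := mgf_pos_iff.mp hY
  exact ⟨(h.exp_mul s t).integrable_mul hX' hY',
    (h.exp_mul s t).integral_mul_eq_mul_integral hX'.1 hY'.1⟩

lemma mul_div_sq_eq_sq_div {K : Type*} [Field K] (x a : K) : x * (a / x) ^ 2 = a ^ 2 / x := by
  rcases eq_or_ne x 0 with rfl | hx
  · simp
  · field_simp

lemma integral_exp_dot_sign_mul_exp_dot_gaussian [IsProbabilityMeasure μ] {n : ℕ}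
    {C : Ω → Fin n → ℝ} {z : Fin n → Ω → ℝ} {v : ℝ≥0} (hC : AEMeasurable C μ)
    (hCunif : μ.map C = ((2 : ℝ≥0∞) ^ n)⁻¹ • ∑ c ∈ signCube (Fin n), Measure.dirac c)
    (hz : ∀ i, μ.map (z i) = gaussianReal 0 v) (hzindep : iIndepFun z μ)
    (hCz : IndepFun C (fun ω i => z i ω) μ) {b : Fin n → ℝ} (hb : b ∈ signCube (Fin n))
    (s t : ℝ) :
    Integrable (fun ω => exp (s * ∑ i, b i * C ω i) * exp (t * ∑ i, b i * z i ω)) μ ∧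
      ∫ ω, exp (s * ∑ i, b i * C ω i) * exp (t * ∑ i, b i * z i ω) ∂μ
        = cosh s ^ n * exp (v * t ^ 2 / 2 * n) := by
  have hsign i : cosh (s * b i) = cosh s ∧ b i ^ 2 = 1 := by
    rcases mem_signCube.mp hb i with h | h <;> simp [h]
  have hX := mgf_sum_mul_of_map_eq_uniform_signCube hC hCunif b s
  have hY := mgf_sum_mul_of_map_eq_gaussianReal hz hzindep b t
  simp only [hsign, prod_const, sum_const, card_univ, Fintype.card_fin, nsmul_eq_mul,
    mul_one] at hX hY
  have hdot : Measurable fun c : Fin n → ℝ => ∑ i, b i * c i := by fun_prop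
  have hind : (fun ω => ∑ i, b i * C ω i) ⟂ᵢ[μ] (fun ω => ∑ i, b i * z i ω) :=
    hCz.comp hdot hdot
  have hXY := hind.integral_exp_mul_mul_exp_mul (s := s) (t := t)
    (by rw [hX]; positivity) (by rw [hY]; positivity)
  exact ⟨hXY.1, hXY.2.trans (by rw [← hX, ← hY])⟩

theorem stmt_14_general
    {Ω : Type} [MeasurableSpace Ω] (μ : Measure Ω) [IsProbabilityMeasure μ]
    (n : ℕ) (a σ : ℝ)
    (z : Fin n → Ω → ℝ)
    (hz : ∀ i, μ.map (z i) = gaussianReal 0 ⟨σ ^ 2, sq_nonneg σ⟩)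
    (hzindep : iIndepFun z μ)
    (C : Ω → Fin n → ℝ) (hCm : Measurable C)
    (hCunif : μ.map C = ((2 : ENNReal) ^ n)⁻¹ •
      ∑ c ∈ Fintype.piFinset (fun _ : Fin n => ({-1, 1} : Finset ℝ)), Measure.dirac c)
    (hCz : IndepFun C (fun ω i => z i ω) μ) :
    (∫ ω, Real.exp (-(n * a ^ 2) / (2 * σ ^ 2)) * ((1 / 2 ^ n) *
        ∑ b ∈ Fintype.piFinset (fun _ : Fin n => ({-1, 1} : Finset ℝ)),
          Real.exp ((a / σ ^ 2) * ∑ i, (a * C ω i + z i ω) * b i)) ∂μ)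
      = Real.cosh (a ^ 2 / σ ^ 2) ^ n := by
  set s := a ^ 2 / σ ^ 2 with hs
  set t := a / σ ^ 2 with ht
  set K := -(n * a ^ 2) / (2 * σ ^ 2) with hK
  have hterm b (hb : b ∈ signCube (Fin n)) :=
    integral_exp_dot_sign_mul_exp_dot_gaussian hCm.aemeasurable hCunif hz hzindep hCz hb s t
  have hsplit (ω : Ω) (b : Fin n → ℝ) : t * ∑ i, (a * C ω i + z i ω) * b i
      = s * ∑ i, b i * C ω i + t * ∑ i, b i * z i ω := by
    simp only [mul_sum, ← sum_add_distrib]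
    exact sum_congr rfl fun i _ => by rw [hs, ht]; ring
  have hE : σ ^ 2 * t ^ 2 / 2 * n = -K := by
    rw [ht, mul_div_sq_eq_sq_div, hK]
    ring
  calc _ = ∫ ω, ∑ b ∈ signCube (Fin n), exp K * (1 / 2 ^ n) *
        (exp (s * ∑ i, b i * C ω i) * exp (t * ∑ i, b i * z i ω)) ∂μ := by
        refine integral_congr_ae (ae_of_all _ fun ω => ?_)
        simp only [← mul_assoc, mul_sum, hsplit, exp_add]
        rfl
    _ = ∑ b ∈ signCube (Fin n), exp K * (1 / 2 ^ n) * (cosh s ^ n * exp (-K)) := by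
        rw [integral_finsetSum _ fun b hb => (hterm b hb).1.const_mul _]
        exact sum_congr rfl fun b hb => by rw [integral_const_mul, (hterm b hb).2, ← hE]; rfl
    _ = cosh s ^ n := by
        rw [sum_const, card_signCube, Fintype.card_fin, nsmul_eq_mul, exp_neg]
        push_cast
        field_simp

/-- For `z₁,…,zₙ` i.i.d. Gaussian with mean `0` and variance `σ²`, `C` uniformly
distributed on `{-1,1}ⁿ` and independent of `z`, `yᵢ = a Cᵢ + zᵢ`, and
`U = exp (-n a²/(2σ²)) (1/2ⁿ) Σ_{b ∈ {-1,1}ⁿ} exp ((a/σ²) Σᵢ yᵢ bᵢ)`,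
one has `E[U] = cosh (a²/σ²) ^ n`. -/
theorem stmt_14
    {Ω : Type} [MeasurableSpace Ω] (μ : Measure Ω) [IsProbabilityMeasure μ]
    (n : ℕ) (hn : 1 ≤ n) (a σ : ℝ) (hσ : 0 < σ)
    (z : Fin n → Ω → ℝ) (hzm : ∀ i, Measurable (z i))
    (hz : ∀ i, μ.map (z i) = gaussianReal 0 ⟨σ ^ 2, sq_nonneg σ⟩)
    (hzindep : iIndepFun z μ)
    (C : Ω → Fin n → ℝ) (hCm : Measurable C)
    (hCunif : μ.map C = ((2 : ENNReal) ^ n)⁻¹ •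
      ∑ c ∈ Fintype.piFinset (fun _ : Fin n => ({-1, 1} : Finset ℝ)), Measure.dirac c)
    (hCz : IndepFun C (fun ω i => z i ω) μ) :
    (∫ ω, Real.exp (-(n * a ^ 2) / (2 * σ ^ 2)) * ((1 / 2 ^ n) *
        ∑ b ∈ Fintype.piFinset (fun _ : Fin n => ({-1, 1} : Finset ℝ)),
          Real.exp ((a / σ ^ 2) * ∑ i, (a * C ω i + z i ω) * b i)) ∂μ)
      = Real.cosh (a ^ 2 / σ ^ 2) ^ n :=
  stmt_14_general μ n a σ z hz hzindep C hCm hCunif hCz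
end
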